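/- arXiv:1706.05539 — 5 statements merged into one kernel-verified Lean document; each statement's English description precedes it below -/
import Mathlib

section
/- Let m ≥ 1 and η_0, …, η_{m-1} ∈ {1,2} with q = Σ_{i=0}^{m-1} η_i 2^i. Let M be the m×m integer matrix whose rows are the vectors v_0, …, v_{m-1} defined by v_0 = (η_0, …, η_{m-1}) and, for 1 ≤ i ≤ m-1, v_i agreeing with v_0 except in coordinates i-1 and i where it equals η_{i-1}+2 and η_i−1 respectively. Then |det M| = q. -/
/-!
Subtracting `v₀` from the other rows leaves the rows `2 e_{i-1} - e_i`, binary carries, which all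
vanish on `w = (2^j)_j`, while `v₀ · w = q`. Since `w₀ = 1`, replacing the first column by the
combination of columns with coefficients `w` does not change the determinant, and the new first
column is `(q, 0, …, 0)`. What remains is a lower triangular minor with `-1` on the diagonal,
so `det M = (-1)^(m-1) q`, and `q > 0` because every digit is positive.
-/

open Matrix Finset

theorem Matrix.det_eq_mul_det_submatrix_succ_of_mulVec_eq_single {R : Type*} [CommRing R]
    {n : ℕ} (A : Matrix (Fin (n + 1)) (Fin (n + 1)) R) {x : Fin (n + 1) → R} (hx : x 0 = 1)
    {c : R} (hA : A *ᵥ x = Pi.single 0 c) :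
    A.det = c * (A.submatrix Fin.succ Fin.succ).det := by
  have hcol : (fun k => ∑ i, x i • A k i) = Pi.single 0 c := by
    rw [← hA]
    ext k
    simp only [mulVec, dotProduct, smul_eq_mul, mul_comm]
  have key := det_updateCol_sum A 0 x
  rw [hx, one_smul, hcol] at key
  have hminor : (A.updateCol 0 (Pi.single 0 c)).submatrix Fin.succ Fin.succ =
      A.submatrix Fin.succ Fin.succ := by
    ext i j
    simp [Fin.succ_ne_zero]
  rw [← key, det_succ_column_zero, Fin.sum_univ_succ, Fin.succAbove_zero, hminor]
  simp [Fin.succ_ne_zero]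

variable {R : Type*} [CommRing R]

/-- Row `i + 1` is `v_{i+1} - v₀`; it encodes the carry `2 · 2^i = 2^(i+1)`. -/
def carryMatrix (η : ℕ → R) (n : ℕ) : Matrix (Fin (n + 1)) (Fin (n + 1)) R :=
  of fun i => Fin.cases (fun j => η j) (fun i => Pi.single i.castSucc 2 - Pi.single i.succ 1) i

theorem carryMatrix_mulVec_pow_two (η : ℕ → R) (n : ℕ) :
    carryMatrix η n *ᵥ (fun j => 2 ^ (j : ℕ)) =
      Pi.single 0 (∑ i ∈ range (n + 1), η i * 2 ^ i) := by
  ext i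
  cases i using Fin.cases with
  | zero =>
    simp [carryMatrix, mulVec, dotProduct, Fin.sum_univ_eq_sum_range (fun i => η i * 2 ^ i)]
  | succ i =>
    simp only [carryMatrix, mulVec, of_apply, Fin.cases_succ, sub_dotProduct, single_dotProduct]
    simp [Fin.succ_ne_zero, pow_succ, mul_comm]

theorem det_carryMatrix_submatrix_succ (η : ℕ → R) (n : ℕ) :
    ((carryMatrix η n).submatrix Fin.succ Fin.succ).det = (-1) ^ n := by
  rw [det_of_isLowerTriangular]
  · have (i : Fin n) : i.succ ≠ i.castSucc := Fin.castSucc_lt_succ.ne'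
    simp [carryMatrix, this]
  · intro i j hij
    rw [OrderDual.toDual_lt_toDual] at hij
    have : (j : ℕ) + 1 ≠ i ∧ (j : ℕ) ≠ i := by omega
    simp [carryMatrix, Fin.ext_iff, this]

theorem det_carryMatrix (η : ℕ → R) (n : ℕ) :
    (carryMatrix η n).det = (-1) ^ n * ∑ i ∈ range (n + 1), η i * 2 ^ i := by
  rw [det_eq_mul_det_submatrix_succ_of_mulVec_eq_single _ (by simp)
    (carryMatrix_mulVec_pow_two η n), det_carryMatrix_submatrix_succ, mul_comm]

theorem det_eq_det_carryMatrix {n : ℕ} (η : ℕ → R) (M : Matrix (Fin (n + 1)) (Fin (n + 1)) R)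
    (hM : ∀ i j : Fin (n + 1), M i j = η j
        + (if 1 ≤ (i : ℕ) ∧ (j : ℕ) = (i : ℕ) - 1 then 2 else 0)
        - (if 1 ≤ (i : ℕ) ∧ (j : ℕ) = (i : ℕ) then 1 else 0)) :
    M.det = (carryMatrix η n).det := by
  refine det_eq_of_forall_row_eq_smul_add_const (fun i => if i = 0 then 0 else 1) 0 rfl
    fun i j => ?_
  rw [hM]
  cases i using Fin.cases with
  | zero => simp [carryMatrix]
  | succ i =>
    simp [carryMatrix, Pi.single_apply, Fin.ext_iff]
    ring

theorem stmt_4 (m : ℕ) (hm : 1 ≤ m) (η : ℕ → ℤ)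
    (hη : ∀ i < m, η i = 1 ∨ η i = 2) (q : ℤ)
    (hq : q = ∑ i ∈ Finset.range m, η i * 2 ^ i)
    (M : Matrix (Fin m) (Fin m) ℤ)
    (hM : ∀ i j : Fin m, M i j = η j
        + (if 1 ≤ (i : ℕ) ∧ (j : ℕ) = (i : ℕ) - 1 then 2 else 0)
        - (if 1 ≤ (i : ℕ) ∧ (j : ℕ) = (i : ℕ) then 1 else 0)) :
    |M.det| = q := by
  obtain ⟨n, rfl⟩ : ∃ n, m = n + 1 := ⟨m - 1, by omega⟩
  have hq_pos : 0 < q := hq ▸ sum_pos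
    (fun i hi => by rcases hη i (mem_range.1 hi) with h | h <;> rw [h] <;> positivity)
    ⟨0, by simp⟩
  rw [det_eq_det_carryMatrix η M hM, det_carryMatrix, ← hq, abs_mul, abs_neg_one_pow, one_mul,
    abs_of_pos hq_pos]
end

section
/- For every positive integer q there exists an m×m integer matrix M with m ≤ ⌈log₂(q+2)⌉, all entries of M in {0,1,2,3,4}, and |det M| = q. -/
/-!
Write `q = ∑_{i ≤ n} η_i 2^i` with digits `η_i ∈ {1, 2}` (bijective base 2); then
`2^(n+1) - 1 ≤ q`. Take the matrix with rows `η` and `η + 2 e_{i-1} - e_i` for `1 ≤ i ≤ n`.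
Subtracting the first row from the others leaves the rows `2 e_{i-1} - e_i`, and expanding along
the first column gives `det = η_0 (-1)^n - 2 det'`, where `det'` belongs to the digits
`η_1, …, η_n`: this is Horner's scheme, so `|det| = q`.
-/

open Matrix

theorem exists_digits_one_two (q : ℕ) (hq : 0 < q) :
    ∃ (n : ℕ) (η : Fin (n + 1) → ℕ), (∀ i, η i ∈ Set.Icc 1 2) ∧ ∑ i, η i * 2 ^ (i : ℕ) = q := by
  induction q using Nat.strong_induction_on with
  | _ q ih =>
    by_cases hq2 : q ≤ 2
    · exact ⟨0, ![q], by simp; omega, by simp⟩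
    · obtain ⟨n, η, hη, hsum⟩ := ih ((q - 1) / 2) (by omega) (by omega)
      refine ⟨n + 1, vecCons (q - 2 * ((q - 1) / 2)) η, ?_, ?_⟩
      · refine Fin.cases ?_ hη
        simp only [cons_val_zero, Set.mem_Icc]
        omega
      · rw [Fin.sum_univ_succ]
        simp only [cons_val_zero, cons_val_succ, Fin.val_succ, pow_succ, Fin.val_zero, pow_zero,
          ← mul_assoc, ← Finset.sum_mul, hsum]
        omega

theorem two_pow_le_sum_digits_add_one {n : ℕ} (η : Fin n → ℕ) (hη : ∀ i, 1 ≤ η i) :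
    2 ^ n ≤ ∑ i, η i * 2 ^ (i : ℕ) + 1 := by
  calc 2 ^ n = ∑ i : Fin n, 2 ^ (i : ℕ) + 1 := by
        rw [Fin.sum_univ_eq_sum_range (2 ^ ·), Nat.geomSum_eq le_rfl]
        have := Nat.one_le_two_pow (n := n)
        simp only [Nat.add_one_sub_one, Nat.div_one]
        omega
    _ ≤ _ := by gcongr with i; exact Nat.le_mul_of_pos_left _ (hη i)

section DigitMatrix

variable {R : Type*} [CommRing R] {n : ℕ}

def hornerMatrix (η : Fin (n + 1) → R) : Matrix (Fin (n + 1)) (Fin (n + 1)) R :=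
  of (vecCons η fun i => Pi.single i.castSucc 2 - Pi.single i.succ 1)

def digitMatrix (η : Fin (n + 1) → R) : Matrix (Fin (n + 1)) (Fin (n + 1)) R :=
  of (vecCons η fun i => η + Pi.single i.castSucc 2 - Pi.single i.succ 1)

theorem det_digitMatrix (η : Fin (n + 1) → R) : (digitMatrix η).det = (hornerMatrix η).det :=
  det_eq_of_forall_row_eq_smul_add_const (vecCons 0 fun _ => 1) 0 rfl fun i j => by
    refine Fin.cases ?_ (fun k => ?_) i
    · simp [digitMatrix, hornerMatrix]
    · simp only [digitMatrix, hornerMatrix, of_apply, cons_val_succ, cons_val_zero, Pi.add_apply,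
        Pi.sub_apply]
      ring

theorem digitMatrix_mem_Icc {η : Fin (n + 1) → ℤ} (hη : ∀ i, η i ∈ Set.Icc 1 2)
    (i j : Fin (n + 1)) : digitMatrix η i j ∈ Set.Icc 0 4 := by
  have := hη j
  simp only [Set.mem_Icc] at this ⊢
  refine Fin.cases ?_ (fun k => ?_) i
  · simp only [digitMatrix, of_apply, cons_val_zero]
    omega
  · simp only [digitMatrix, of_apply, cons_val_succ, Pi.add_apply, Pi.sub_apply, Pi.single_apply,
      Fin.ext_iff, Fin.val_succ, Fin.val_castSucc]
    split_ifs <;> omega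

theorem hornerMatrix_succ_succ_zero (η : Fin (n + 2) → R) (i : Fin n) :
    hornerMatrix η i.succ.succ 0 = 0 := by
  simp only [hornerMatrix, of_apply, cons_val_succ, Pi.sub_apply, Pi.single_apply, Fin.ext_iff,
    Fin.val_zero, Fin.val_succ, Fin.val_castSucc]
  rw [if_neg (by omega), if_neg (by omega), sub_zero]

theorem det_hornerMatrix_submatrix_succ (η : Fin (n + 2) → R) :
    ((hornerMatrix η).submatrix Fin.succ Fin.succ).det = (-1) ^ (n + 1) := by
  rw [det_of_isLowerTriangular]
  · simp [hornerMatrix, Pi.single_apply, Fin.ext_iff]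
  · intro i j (hij : i < j)
    have : (i : ℕ) < j := hij
    simp only [hornerMatrix, submatrix_apply, of_apply, cons_val_succ, Pi.sub_apply,
      Pi.single_apply, Fin.ext_iff, Fin.val_succ, Fin.val_castSucc]
    rw [if_neg (by omega), if_neg (by omega), sub_zero]

theorem hornerMatrix_submatrix_succAbove_one (η : Fin (n + 2) → R) :
    (hornerMatrix η).submatrix (Fin.succAbove 1) Fin.succ = hornerMatrix (Fin.tail η) := by
  ext i j
  refine Fin.cases ?_ (fun k => ?_) i
  · simp [hornerMatrix, Fin.tail]
  · simp [hornerMatrix, Pi.single_apply, Fin.ext_iff]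

theorem det_hornerMatrix (η : Fin (n + 1) → R) :
    (hornerMatrix η).det = (-1) ^ n * ∑ i, η i * 2 ^ (i : ℕ) := by
  induction n with
  | zero => simp [hornerMatrix]
  | succ n ih =>
    rw [det_succ_column_zero, Fin.sum_univ_succ, Fin.sum_univ_succ, Fin.succAbove_zero,
      det_hornerMatrix_submatrix_succ, Fin.succ_zero_eq_one, hornerMatrix_submatrix_succAbove_one,
      ih, Fin.sum_univ_succ (fun i => η i * _)]
    simp only [hornerMatrix_succ_succ_zero, mul_zero, zero_mul, Finset.sum_const_zero, add_zero]
    simp only [hornerMatrix, of_apply, cons_val_zero, cons_val_one, Pi.sub_apply,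
      Fin.castSucc_zero, Pi.single_eq_same, Pi.single_eq_of_ne' (Fin.succ_ne_zero 0), Fin.tail,
      Fin.val_zero, Fin.val_one, Fin.val_succ, pow_zero, pow_succ, ← mul_assoc,
      ← Finset.sum_mul]
    ring

end DigitMatrix

theorem stmt_5 (q : ℕ) (hq : 0 < q) :
    ∃ (m : ℕ) (M : Matrix (Fin m) (Fin m) ℤ),
      m ≤ Nat.clog 2 (q + 2) ∧
      (∀ i j, M i j ∈ ({0, 1, 2, 3, 4} : Set ℤ)) ∧
      |M.det| = q := by
  obtain ⟨n, η, hη, hsum⟩ := exists_digits_one_two q hq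
  refine ⟨n + 1, digitMatrix fun i => (η i : ℤ), ?_, fun i j => ?_, ?_⟩
  · have := two_pow_le_sum_digits_add_one η fun i => (hη i).1
    exact ((Nat.lt_clog_iff_pow_lt one_lt_two).2 (by omega)).le
  · have := digitMatrix_mem_Icc (η := fun i => (η i : ℤ))
      (fun i => ⟨mod_cast (hη i).1, mod_cast (hη i).2⟩) i j
    simp only [Set.mem_insert_iff, Set.mem_singleton_iff, Set.mem_Icc] at this ⊢
    omega
  · rw [det_digitMatrix, det_hornerMatrix, abs_mul, abs_neg_one_pow, one_mul, ← hsum]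
    push_cast
    exact abs_of_nonneg (by positivity)
end

section
/- If n ≡ 2 (mod 4), then f(n) ≤ 3: there is an n-uniform hypergraph with 3 edges and positive discrepancy. -/
/-!
Split `n = 2m` with `m` odd and take three pairwise disjoint blocks `A`, `B`, `C` of size `m`,
with edges `A ∪ B`, `B ∪ C`, `A ∪ C`. If a coloring balanced all three edges, the numbers of
`true` vertices in the blocks would satisfy `a + b = b + c = a + c = m`, so `2a = m`,
contradicting that `m` is odd.
-/

open Finset

lemma two_mul_card_filter_eq_card {α : Type*} {c : α → Bool} {s : Finset α}
    (h : #(s.filter (c · = true)) = #(s.filter (c · = false))) :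
    2 * #(s.filter (c · = true)) = #s := by
  have := card_filter_add_card_filter_not (s := s) (fun v => c v = true)
  simp only [Bool.not_eq_true] at this
  omega

namespace TriangleHypergraph

variable {α : Type*} [DecidableEq α]

def edges (A B C : Finset α) : Finset (Finset α) := {A ∪ B, B ∪ C, A ∪ C}

lemma union_ne_union_of_disjoint {A B C D : Finset α} (hA : A.Nonempty)
    (hAC : Disjoint A C) (hAD : Disjoint A D) : A ∪ B ≠ C ∪ D := by
  obtain ⟨x, hx⟩ := hA
  intro h
  have hxCD : x ∈ C ∪ D := h ▸ mem_union_left B hx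
  rcases mem_union.1 hxCD with hxC | hxD
  · exact disjoint_left.1 hAC hx hxC
  · exact disjoint_left.1 hAD hx hxD

variable {A B C : Finset α}

lemma card_edges (hA : A.Nonempty) (hB : B.Nonempty)
    (hAB : Disjoint A B) (hBC : Disjoint B C) (hAC : Disjoint A C) :
    #(edges A B C) = 3 := by
  have h₁ : A ∪ B ≠ B ∪ C := union_ne_union_of_disjoint hA hAB hAC
  have h₂ : A ∪ B ≠ A ∪ C := by
    rw [union_comm A B]; exact union_ne_union_of_disjoint hB hAB.symm hBC
  have h₃ : B ∪ C ≠ A ∪ C := union_ne_union_of_disjoint hB hAB.symm hBC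
  rw [edges, card_insert_of_notMem (by simp [h₁, h₂]),
    card_insert_of_notMem (by simp [h₃]), card_singleton]

lemma card_of_mem_edges {m : ℕ} (hA : #A = m) (hB : #B = m) (hC : #C = m)
    (hAB : Disjoint A B) (hBC : Disjoint B C) (hAC : Disjoint A C) :
    ∀ e ∈ edges A B C, #e = 2 * m := by
  simp only [edges, mem_insert, mem_singleton, forall_eq_or_imp, forall_eq]
  refine ⟨?_, ?_, ?_⟩ <;> rw [card_union_of_disjoint ‹_›] <;> omega

lemma exists_unbalanced_edge {m : ℕ} (hm : Odd m) (hA : #A = m) (hB : #B = m) (hC : #C = m)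
    (hAB : Disjoint A B) (hBC : Disjoint B C) (hAC : Disjoint A C) (c : α → Bool) :
    ∃ e ∈ edges A B C, #(e.filter (c · = true)) ≠ #(e.filter (c · = false)) := by
  by_contra! hbal
  have htrue : ∀ {S T : Finset α}, Disjoint S T → S ∪ T ∈ edges A B C →
      2 * (#(S.filter (c · = true)) + #(T.filter (c · = true))) = #S + #T := by
    intro S T hST hmem
    have h := two_mul_card_filter_eq_card (hbal _ hmem)
    rw [filter_union, card_union_of_disjoint (disjoint_filter_filter hST),
      card_union_of_disjoint hST] at h
    exact h
  have h₁ := htrue hAB (by simp [edges])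
  have h₂ := htrue hBC (by simp [edges])
  have h₃ := htrue hAC (by simp [edges])
  obtain ⟨k, rfl⟩ := hm
  omega

end TriangleHypergraph

lemma disjoint_Ico_of_le {a b c d : ℕ} (h : b ≤ c) : Disjoint (Ico a b) (Ico c d) :=
  disjoint_left.2 fun x hx hx' => by
    rw [mem_Ico] at hx hx'
    omega

theorem stmt_16 (n : ℕ) (hn : n % 4 = 2) :
    ∃ E : Finset (Finset ℕ), E.card = 3 ∧ (∀ e ∈ E, e.card = n) ∧
      ∀ c : ℕ → Bool, ∃ e ∈ E,
        (e.filter fun v => c v = true).card ≠ (e.filter fun v => c v = false).card := by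
  obtain ⟨m, hm, rfl⟩ : ∃ m, Odd m ∧ n = 2 * m := ⟨n / 2, ⟨n / 4, by omega⟩, by omega⟩
  have hAB : Disjoint (Ico 0 m) (Ico m (2 * m)) := disjoint_Ico_of_le le_rfl
  have hBC : Disjoint (Ico m (2 * m)) (Ico (2 * m) (3 * m)) := disjoint_Ico_of_le le_rfl
  have hAC : Disjoint (Ico 0 m) (Ico (2 * m) (3 * m)) := disjoint_Ico_of_le (by omega)
  have hA : #(Ico 0 m) = m := by rw [Nat.card_Ico]; omega
  have hB : #(Ico m (2 * m)) = m := by rw [Nat.card_Ico]; omega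
  have hC : #(Ico (2 * m) (3 * m)) = m := by rw [Nat.card_Ico]; omega
  have hm₀ := hm.pos
  open TriangleHypergraph in
  exact ⟨edges _ _ _, card_edges (nonempty_Ico.2 hm₀) (nonempty_Ico.2 (by omega)) hAB hBC hAC,
    card_of_mem_edges hA hB hC hAB hBC hAC, exists_unbalanced_edge hm hA hB hC hAB hBC hAC⟩
end

section
/- Suppose for some n₀ there is an n₀-uniform hypergraph H₀ with f₀ edges and discrepancy at least 2. Let H₁, …, H_{2r-1} be vertex-disjoint copies of H₀ and form the (r·n₀)-uniform hypergraph H with vertex set the disjoint union of the V(H_i) and edges all unions e_{i₁} ∪ ⋯ ∪ e_{i_r} where i₁ < ⋯ < i_r are r distinct indices in {1,…,2r-1} and e_{i_j} ∈ E(H_{i_j}). Then H has discrepancy at least 2r and at most C(2r-1, r) · f₀^r edges. -/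
/-- `d c S` is the number of red (`true`) vertices minus the number of blue
(`false`) vertices of the coloring `c` in `S`. -/
def d {α : Type*} [DecidableEq α] (c : α → Bool) (S : Finset α) : ℤ :=
  ((S.filter fun v => c v = true).card : ℤ) - ((S.filter fun v => c v = false).card : ℤ)

lemma d_biUnion {α ι : Type*} [DecidableEq α] [DecidableEq ι] (c : α → Bool)
    (A : Finset ι) (g : ι → Finset α)
    (h : ∀ i ∈ A, ∀ j ∈ A, i ≠ j → Disjoint (g i) (g j)) :
    d c (A.biUnion g) = ∑ i ∈ A, d c (g i) := by
  unfold d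
  rw [Finset.filter_biUnion, Finset.filter_biUnion,
    Finset.card_biUnion (fun i hi j hj hij => Finset.disjoint_filter_filter (h i hi j hj hij)),
    Finset.card_biUnion (fun i hi j hj hij => Finset.disjoint_filter_filter (h i hi j hj hij))]
  push_cast
  rw [Finset.sum_sub_distrib]

theorem stmt_18 {α : Type*} [DecidableEq α] (r n₀ f₀ : ℕ) (hr : 1 ≤ r)
    (E : Fin (2 * r - 1) → Finset (Finset α))
    -- the copies are vertex disjoint
    (hdisj : ∀ i j, i ≠ j → ∀ e ∈ E i, ∀ e' ∈ E j, Disjoint e e')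
    -- each copy has f₀ edges, each edge of size n₀
    (hcard : ∀ i, (E i).card = f₀)
    (hunif : ∀ i, ∀ e ∈ E i, e.card = n₀)
    -- each copy has discrepancy at least 2
    (hdisc : ∀ i, ∀ c : α → Bool, ∃ e ∈ E i, 2 ≤ |d c e|)
    (EH : Finset (Finset α))
    (hEH : ∀ e, e ∈ EH ↔ ∃ A : Finset (Fin (2 * r - 1)), A.card = r ∧
      ∃ g : Fin (2 * r - 1) → Finset α, (∀ i ∈ A, g i ∈ E i) ∧ e = A.biUnion g) :
    EH.card ≤ Nat.choose (2 * r - 1) r * f₀ ^ r ∧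
    (∀ e ∈ EH, e.card = r * n₀) ∧
    ∀ c : α → Bool, ∃ e ∈ EH, 2 * r ≤ |d c e| := by
  refine ⟨?_, ?_, ?_⟩
  · -- cardinality bound
    have hsub : EH ⊆ (Finset.univ.powersetCard r).biUnion (fun A =>
        (A.pi (fun i => E i)).image (fun g =>
          A.biUnion (fun i => if h : i ∈ A then g i h else ∅))) := by
      intro e he
      obtain ⟨A, hA, g, hg, rfl⟩ := (hEH e).1 he
      refine Finset.mem_biUnion.2 ⟨A, ?_, ?_⟩
      · exact Finset.mem_powersetCard.2 ⟨Finset.subset_univ _, hA⟩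
      · refine Finset.mem_image.2 ⟨fun i _ => g i, ?_, ?_⟩
        · exact Finset.mem_pi.2 (fun i hi => hg i hi)
        · apply Finset.biUnion_congr rfl
          intro i hi; simp [hi]
    calc EH.card ≤ _ := Finset.card_le_card hsub
      _ ≤ ∑ A ∈ Finset.univ.powersetCard r,
          ((A.pi (fun i => E i)).image (fun g =>
            A.biUnion (fun i => if h : i ∈ A then g i h else ∅))).card :=
        Finset.card_biUnion_le
      _ ≤ ∑ A ∈ Finset.univ.powersetCard r, f₀ ^ r := by
        apply Finset.sum_le_sum
        intro A hA
        calc _ ≤ (A.pi (fun i => E i)).card := Finset.card_image_le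
          _ = ∏ i ∈ A, (E i).card := Finset.card_pi _ _
          _ = f₀ ^ r := by
            rw [Finset.prod_congr rfl fun i _ => hcard i, Finset.prod_const,
              (Finset.mem_powersetCard.1 hA).2]
      _ = Nat.choose (2 * r - 1) r * f₀ ^ r := by
        rw [Finset.sum_const, smul_eq_mul, Finset.card_powersetCard, Finset.card_univ,
          Fintype.card_fin]
  · -- uniformity
    intro e he
    obtain ⟨A, hA, g, hg, rfl⟩ := (hEH e).1 he
    rw [Finset.card_biUnion (fun i hi j hj hij => hdisj i j hij _ (hg i hi) _ (hg j hj))]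
    rw [Finset.sum_congr rfl (fun i hi => hunif i _ (hg i hi)), Finset.sum_const, hA,
      smul_eq_mul]
  · -- discrepancy
    intro c
    -- choose a bad edge in each copy
    choose g hgE hgd using fun i => hdisc i c
    set P : Finset (Fin (2 * r - 1)) := Finset.univ.filter (fun i => 2 ≤ d c (g i)) with hP
    set N : Finset (Fin (2 * r - 1)) := Finset.univ.filter (fun i => d c (g i) ≤ -2) with hN
    have hcov : ∀ i, i ∈ P ∨ i ∈ N := by
      intro i
      rcases le_or_gt 0 (d c (g i)) with h | h
      · left; simp only [hP, Finset.mem_filter, Finset.mem_univ, true_and]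
        have := hgd i; rwa [abs_of_nonneg h] at this
      · right; simp only [hN, Finset.mem_filter, Finset.mem_univ, true_and]
        have := hgd i; rw [abs_of_neg h] at this; linarith
    have hPN : 2 * r - 1 ≤ P.card + N.card := by
      have : (Finset.univ : Finset (Fin (2 * r - 1))) ⊆ P ∪ N := by
        intro i _; exact Finset.mem_union.2 (hcov i)
      calc 2 * r - 1 = (Finset.univ : Finset (Fin (2 * r - 1))).card := by
            simp
        _ ≤ (P ∪ N).card := Finset.card_le_card this
        _ ≤ P.card + N.card := Finset.card_union_le _ _
    have hge : r ≤ P.card ∨ r ≤ N.card := by omega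
    rcases hge with hge | hge
    · obtain ⟨A, hAP, hA⟩ := Finset.exists_subset_card_eq hge
      refine ⟨A.biUnion g, (hEH _).2 ⟨A, hA, g, fun i hi => hgE i, rfl⟩, ?_⟩
      have hd : d c (A.biUnion g) = ∑ i ∈ A, d c (g i) :=
        d_biUnion c A g (fun i _ j _ hij => hdisj i j hij _ (hgE i) _ (hgE j))
      have hsum : (2 * r : ℤ) ≤ ∑ i ∈ A, d c (g i) := by
        calc (2 * r : ℤ) = ∑ _i ∈ A, (2 : ℤ) := by
              rw [Finset.sum_const, hA]; ring
          _ ≤ _ := Finset.sum_le_sum (fun i hi => by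
              have := hAP hi
              simp only [hP, Finset.mem_filter] at this
              exact this.2)
      rw [hd]
      exact le_trans hsum (le_abs_self _)
    · obtain ⟨A, hAN, hA⟩ := Finset.exists_subset_card_eq hge
      refine ⟨A.biUnion g, (hEH _).2 ⟨A, hA, g, fun i hi => hgE i, rfl⟩, ?_⟩
      have hd : d c (A.biUnion g) = ∑ i ∈ A, d c (g i) :=
        d_biUnion c A g (fun i _ j _ hij => hdisj i j hij _ (hgE i) _ (hgE j))
      have hsum : ∑ i ∈ A, d c (g i) ≤ -(2 * r : ℤ) := by
        calc (∑ i ∈ A, d c (g i)) ≤ ∑ _i ∈ A, (-2 : ℤ) :=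
              Finset.sum_le_sum (fun i hi => by
                have := hAN hi
                simp only [hN, Finset.mem_filter] at this
                exact this.2)
          _ = -(2 * r : ℤ) := by rw [Finset.sum_const, hA]; ring
      rw [hd]
      calc (2 * r : ℤ) ≤ -(∑ i ∈ A, d c (g i)) := by linarith
        _ ≤ |∑ i ∈ A, d c (g i)| := neg_le_abs _
end

section
/- Let q ≥ 3 be odd, η_0,…,η_{m-1} ∈ {1,2} with q = Σ η_i 2^i, and let n be a positive integer with q ∤ n and n ≥ q·2^m. Choose an odd δ ∈ (−q, q) with q | n + η_{m-1} δ, and set x_0 = (n + η_{m-1} δ)/q, x_i = 2^i x_0 for 1 ≤ i ≤ m−2, and x_{m-1} = 2^{m-1} x_0 − δ. Then all x_i are positive integers, ⟨v_i, x⟩ = n for i = 0, …, m−2, and ⟨v_{m-1}, x⟩ = n + δ, where v_0 = (η_0,…,η_{m-1}) and v_i = v_0 + 2e_{i-1} − e_i for 1 ≤ i ≤ m−1. -/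
theorem stmt_19 (q : ℤ) (hq3 : 3 ≤ q) (hodd : Odd q)
    (m : ℕ) (hm : 1 ≤ m) (η : ℕ → ℤ)
    (hη : ∀ i < m, η i = 1 ∨ η i = 2)
    (hqsum : q = ∑ i ∈ Finset.range m, η i * 2 ^ i)
    (n : ℤ) (hn : 0 < n) (hqn : ¬ q ∣ n) (hbig : q * 2 ^ m ≤ n)
    (δ : ℤ) (hδodd : Odd δ) (hδ1 : -q < δ) (hδ2 : δ < q)
    (hdvd : q ∣ n + η (m - 1) * δ)
    (x : ℕ → ℤ)
    (hx0 : x 0 = (n + η (m - 1) * δ) / q)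
    (hxi : ∀ i, 1 ≤ i → i ≤ m - 2 → x i = 2 ^ i * x 0)
    (hxm : x (m - 1) = 2 ^ (m - 1) * x 0 - δ)
    (v : ℕ → ℕ → ℤ)
    (hv0 : ∀ j < m, v 0 j = η j)
    (hvi : ∀ i, 1 ≤ i → i < m → ∀ j < m,
      v i j = η j + (if j = i - 1 then 2 else 0) - (if j = i then 1 else 0)) :
    (∀ i < m, 0 < x i) ∧
    (∀ i < m - 1, ∑ j ∈ Finset.range m, v i j * x j = n) ∧
    ∑ j ∈ Finset.range m, v (m - 1) j * x j = n + δ := by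
  have hq0 : (0:ℤ) < q := by linarith
  rcases Nat.lt_or_ge m 2 with hm1 | hm2
  · exfalso
    have hm1' : m = 1 := by omega
    subst hm1'
    norm_num at hxm
    obtain ⟨c, hc⟩ := hδodd
    omega
  obtain ⟨k, rfl⟩ : ∃ k, m = k + 2 := ⟨m - 2, by omega⟩
  have e1 : k + 2 - 1 = k + 1 := rfl
  have e2 : k + 2 - 2 = k := rfl
  simp only [e1, e2] at *
  have hη1 : η (k+1) = 1 ∨ η (k+1) = 2 := hη (k+1) (by omega)
  have hqx0 : q * x 0 = n + η (k+1) * δ := by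
    obtain ⟨c, hc⟩ := hdvd
    rw [hx0, hc, Int.mul_ediv_cancel_left _ (by linarith : q ≠ 0)]
  have hxj : ∀ j, j ≤ k → x j = 2 ^ j * x 0 := by
    intro j hj
    rcases Nat.eq_zero_or_pos j with h0 | h1
    · subst h0; simp
    · exact hxi j h1 hj
  have hgeo : ∀ l : ℕ, ∑ i ∈ Finset.range l, (2:ℤ) ^ i = 2 ^ l - 1 := by
    intro l
    induction l with
    | zero => simp
    | succ l ih => rw [Finset.sum_range_succ, ih]; ring
  set s : ℤ := ∑ i ∈ Finset.range (k+1), η i * 2 ^ i with hsdef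
  have hqs : q = s + η (k+1) * 2 ^ (k+1) := by
    rw [hqsum, Finset.sum_range_succ]
  have hs1 : 2 ^ (k+1) - 1 ≤ s := by
    rw [hsdef, ← hgeo (k+1)]
    refine Finset.sum_le_sum fun i hi => ?_
    have hp : (0:ℤ) < 2 ^ i := pow_pos (by norm_num) i
    rcases hη i (by rw [Finset.mem_range] at hi; omega) with h | h <;> rw [h] <;> linarith
  have hs2 : s ≤ 2 ^ (k+2) - 2 := by
    have : s ≤ ∑ i ∈ Finset.range (k+1), 2 * (2:ℤ) ^ i := by
      rw [hsdef]
      refine Finset.sum_le_sum fun i hi => ?_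
      have hp : (0:ℤ) < 2 ^ i := pow_pos (by norm_num) i
      rcases hη i (by rw [Finset.mem_range] at hi; omega) with h | h <;> rw [h] <;> linarith
    rw [← Finset.mul_sum, hgeo (k+1)] at this
    have hpow : (2:ℤ) ^ (k+2) = 2 * 2 ^ (k+1) := by ring
    linarith
  -- main sum identity for v 0
  have hS0 : ∑ j ∈ Finset.range (k+2), η j * x j = n := by
    rw [Finset.sum_range_succ, hxm]
    have h1 : ∑ j ∈ Finset.range (k+1), η j * x j = s * x 0 := by
      rw [hsdef, Finset.sum_mul]
      refine Finset.sum_congr rfl fun j hj => ?_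
      rw [Finset.mem_range] at hj
      rw [hxj j (by omega)]; ring
    rw [h1]
    linear_combination hqx0 - x 0 * hqs
  have hSi : ∀ i, 1 ≤ i → i < k + 2 →
      ∑ j ∈ Finset.range (k+2), v i j * x j = n + 2 * x (i-1) - x i := by
    intro i h1 h2
    have hrw : ∀ j ∈ Finset.range (k+2), v i j * x j
        = η j * x j + ((if j = i - 1 then 2 * x j else 0) - (if j = i then x j else 0)) := by
      intro j hj
      rw [hvi i h1 h2 j (Finset.mem_range.mp hj)]
      split_ifs <;> ring
    rw [Finset.sum_congr rfl hrw, Finset.sum_add_distrib, Finset.sum_sub_distrib, hS0,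
        Finset.sum_ite_eq', Finset.sum_ite_eq']
    have hi1 : i - 1 ∈ Finset.range (k+2) := Finset.mem_range.mpr (by omega)
    have hi2 : i ∈ Finset.range (k+2) := Finset.mem_range.mpr h2
    rw [if_pos hi1, if_pos hi2]
    ring
  -- positivity
  have h2k1 : (2:ℤ) ≤ 2 ^ (k+1) := by
    calc (2:ℤ) = 2 ^ 1 := by norm_num
    _ ≤ 2 ^ (k+1) := pow_le_pow_right₀ (by norm_num) (by omega)
  have hpow2 : (2:ℤ) ^ (k+2) = 2 * 2 ^ (k+1) := by ring
  have hx0pos : 0 < x 0 := by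
    have h1 : 0 < q * x 0 := by
      rw [hqx0]
      rcases hη1 with h | h <;> rw [h] <;> nlinarith
    by_contra h
    push_neg at h
    nlinarith [mul_nonneg hq0.le (neg_nonneg.2 h)]
  have hxm1pos : 0 < x (k+1) := by
    have key : q * x (k+1) = 2 ^ (k+1) * n - δ * s := by
      rw [hxm]
      linear_combination (2:ℤ) ^ (k+1) * hqx0 - δ * hqs
    have hA : 0 ≤ (q - 1 - δ) * s := mul_nonneg (by omega) (by nlinarith)
    have hB : 0 ≤ (q - 1) * (2 ^ (k+2) - 2 - s) := mul_nonneg (by omega) (by linarith)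
    have hC : 0 ≤ (2 ^ (k+1) - 1) * n := mul_nonneg (by linarith) hn.le
    by_contra h
    push_neg at h
    nlinarith [mul_nonneg hq0.le (neg_nonneg.2 h), hbig, hpow2]
  refine ⟨?_, ?_, ?_⟩
  · intro i hi
    by_cases hik : i = k + 1
    · subst hik; exact hxm1pos
    · rw [hxj i (by omega)]
      exact mul_pos (pow_pos (by norm_num) i) hx0pos
  · intro i hi
    rcases Nat.eq_zero_or_pos i with h0 | h1
    · subst h0
      rw [Finset.sum_congr rfl fun j hj => by rw [hv0 j (Finset.mem_range.mp hj)]]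
      exact hS0
    · rw [hSi i h1 (by omega), hxj i (by omega), hxj (i-1) (by omega)]
      have hp : (2:ℤ) ^ i = 2 * 2 ^ (i-1) := by
        rw [← pow_succ']
        congr 1
        omega
      rw [hp]; ring
  · rw [hSi (k+1) (by omega) (by omega), hxm,
        show k + 1 - 1 = k from rfl, hxj k le_rfl]
    ring
end
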